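/- arXiv:1103.4278 — 2 statements merged into one kernel-verified Lean document; each statement's English description precedes it below -/
import Mathlib

section
/- Let k be a field and (A, 𝔪) a local k-algebra with residue field K = A/𝔪. Let Ã = K ⊗_k A, let M̃ be the kernel of the evaluation map Ã → K, λ⊗a ↦ λ·a(x), and let ϑ : 𝔪/𝔪² → M̃/M̃² be the K-linear map induced by a ↦ 1⊗a. Then the sequence 𝔪/𝔪² →(ϑ) M̃/M̃² → Ω_{K/k} → 0 of K-vector spaces is exact: the second map is surjective and its kernel equals the image of ϑ. -/
open IsLocalRing TensorProduct

section LocalAlgebra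

variable (k A : Type*) [Field k] [CommRing A] [IsLocalRing A] [Algebra k A]

instance : IsScalarTower k A (ResidueField A) :=
  IsScalarTower.of_algebraMap_eq fun x =>
    (IsLocalRing.ResidueField.map_residue (algebraMap k A) x).symm

/-- The evaluation map `Ã = K ⊗_k A → K`, `λ ⊗ a ↦ λ·a(x)`. -/
noncomputable def ev : (ResidueField A ⊗[k] A) →ₐ[ResidueField A] ResidueField A :=
  Algebra.TensorProduct.lift (AlgHom.id _ _) (IsScalarTower.toAlgHom k A (ResidueField A))
    fun _ _ => Commute.all _ _

/-- The ideal `M̃ = ker(ev) ⊆ Ã`. -/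
noncomputable def Mker : Ideal (ResidueField A ⊗[k] A) := RingHom.ker (ev k A)

/-- For `m ∈ 𝔪`, the element `1 ⊗ m` of `M̃`. -/
noncomputable def oneTmul (m : maximalIdeal A) : Mker k A :=
  ⟨(1 : ResidueField A) ⊗ₜ[k] (m : A), by
    simp only [Mker, RingHom.mem_ker, ev, Algebra.TensorProduct.lift_tmul, map_one, one_mul,
      AlgHom.coe_id, id_eq, IsScalarTower.coe_toAlgHom', ResidueField.algebraMap_eq]
    exact Ideal.Quotient.eq_zero_iff_mem.mpr m.2⟩

/-- For `a : A`, the element `1 ⊗ a − a(x) ⊗ 1` of `M̃`. -/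
noncomputable def gen (a : A) : Mker k A :=
  ⟨(1 : ResidueField A) ⊗ₜ[k] a - residue A a ⊗ₜ[k] (1 : A), by
    simp [Mker, RingHom.mem_ker, ev, Algebra.TensorProduct.lift_tmul]⟩

end LocalAlgebra

/-! Every class in `M̃/M̃²` is a `K`-combination of the classes of `1 ⊗ a − a(x) ⊗ 1`, since
`σ − ev(σ) ⊗ 1 ∈ M̃` is such a combination for every `σ ∈ Ã`; as `ψ` sends these classes to the
differentials `d(a(x))`, which span `Ω_{K/k}`, `ψ` is surjective. For exactness in the middle,
`a ↦ [1 ⊗ a − a(x) ⊗ 1]` is a `k`-derivation `A → (M̃/M̃²)/im ϑ` (Leibniz holds modulo the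
product of two such elements, which lies in `M̃²`) vanishing on `𝔪`, so it descends to a
derivation of `K`. The induced map `Ω_{K/k} → (M̃/M̃²)/im ϑ` composed with `ψ` is the quotient
map, hence `ker ψ ⊆ im ϑ`. -/

theorem Derivation.exists_comp_eq_of_surjective {R A B M : Type*} [CommRing R] [CommRing A]
    [CommRing B] [Algebra R A] [Algebra R B] [AddCommGroup M] [Module R M] [Module B M]
    [IsScalarTower R B M] (f : A →ₐ[R] B) (hf : Function.Surjective f) (δ : A →ₗ[R] M)
    (hδ : ∀ a b, δ (a * b) = f a • δ b + f b • δ a) (hker : ∀ a, f a = 0 → δ a = 0) :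
    ∃ D : Derivation R B M, ∀ a, D (f a) = δ a := by
  let D : B →ₗ[R] M := (LinearMap.ker f.toLinearMap).liftQ δ (fun a => hker a) ∘ₗ
    (f.toLinearMap.quotKerEquivOfSurjective hf).symm.toLinearMap
  have hD (a : A) : D (f a) = δ a := by
    have : (f.toLinearMap.quotKerEquivOfSurjective hf).symm (f a) = Submodule.Quotient.mk a :=
      (LinearEquiv.symm_apply_eq _).2 rfl
    simp only [D, LinearMap.comp_apply, LinearEquiv.coe_coe, this]
    rfl
  refine ⟨Derivation.mk' D fun x y => ?_, hD⟩
  obtain ⟨a, rfl⟩ := hf x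
  obtain ⟨b, rfl⟩ := hf y
  rw [← map_mul, hD, hD, hD, hδ]

section Cotangent

variable (k A : Type*) [Field k] [CommRing A] [IsLocalRing A] [Algebra k A]

theorem ev_tmul (l : ResidueField A) (a : A) : ev k A (l ⊗ₜ[k] a) = l * residue A a := by
  simp [ev, ResidueField.algebraMap_eq]

theorem sub_algebraMap_ev_mem_mker (σ : ResidueField A ⊗[k] A) :
    σ - algebraMap (ResidueField A) _ (ev k A σ) ∈ Mker k A := by
  simp [Mker, RingHom.mem_ker, ev_tmul]

theorem oneTmul_eq_gen (m : maximalIdeal A) : oneTmul k A m = gen k A m := by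
  ext
  simp [oneTmul, gen, (residue_eq_zero_iff _).2 m.2]

theorem gen_add (a b : A) : gen k A (a + b) = gen k A a + gen k A b := by
  ext
  simp only [gen, map_add, tmul_add, add_tmul, Submodule.coe_add]
  abel

theorem gen_smul (c : k) (a : A) : gen k A (c • a) = c • gen k A a := by
  ext
  have hres : residue A (c • a) = c • residue A a :=
    map_smul (IsScalarTower.toAlgHom k A (ResidueField A)) c a
  simp only [gen, hres, Submodule.coe_smul_of_tower, smul_sub, tmul_smul, smul_tmul']

noncomputable def genₗ : A →ₗ[k] Mker k A where
  toFun := gen k A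
  map_add' := gen_add k A
  map_smul' := gen_smul k A

theorem toCotangent_gen_mul (a b : A) :
    (Mker k A).toCotangent (gen k A (a * b)) =
      residue A a • (Mker k A).toCotangent (gen k A b) +
        residue A b • (Mker k A).toCotangent (gen k A a) := by
  rw [← LinearMap.map_smul_of_tower, ← LinearMap.map_smul_of_tower, ← map_add,
    Ideal.toCotangent_eq, pow_two]
  -- `gen (a * b) - a(x) • gen b - b(x) • gen a = gen a * gen b`
  convert Ideal.mul_mem_mul (gen k A a).2 (gen k A b).2 using 1
  simp only [gen, Submodule.coe_add, SetLike.val_smul_of_tower, Algebra.smul_def,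
    Algebra.TensorProduct.algebraMap_apply, Algebra.algebraMap_self, RingHom.id_apply, map_mul]
  simp only [sub_mul, mul_sub, Algebra.TensorProduct.tmul_mul_tmul, one_mul, mul_one,
    mul_comm (residue A b)]
  ring

theorem toCotangent_sub_algebraMap_ev_mem_span (σ : ResidueField A ⊗[k] A) :
    (Mker k A).toCotangent ⟨_, sub_algebraMap_ev_mem_mker k A σ⟩ ∈
      Submodule.span (ResidueField A) (Set.range fun a => (Mker k A).toCotangent (gen k A a)) := by
  induction σ using TensorProduct.induction_on with
  | zero =>
    convert Submodule.zero_mem _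
    rw [← map_zero (Mker k A).toCotangent]
    congr 1
    ext
    simp
  | tmul l a =>
    have hσ : (⟨_, sub_algebraMap_ev_mem_mker k A (l ⊗ₜ a)⟩ : Mker k A) = l • gen k A a := by
      ext
      simp [gen, ev_tmul, Algebra.smul_def, mul_sub, Algebra.TensorProduct.tmul_mul_tmul]
    rw [hσ, LinearMap.map_smul_of_tower]
    exact Submodule.smul_mem _ _ (Submodule.subset_span ⟨a, rfl⟩)
  | add σ τ hσ hτ =>
    convert add_mem hσ hτ using 1
    rw [← map_add]
    congr 1
    ext
    simp only [map_add, Submodule.coe_add]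
    abel

theorem span_range_toCotangent_gen :
    Submodule.span (ResidueField A) (Set.range fun a => (Mker k A).toCotangent (gen k A a)) = ⊤ := by
  refine eq_top_iff.2 fun x _ => ?_
  obtain ⟨⟨σ, hσ⟩, rfl⟩ := Ideal.toCotangent_surjective _ x
  convert toCotangent_sub_algebraMap_ev_mem_span k A σ
  rw [show ev k A σ = 0 from hσ, map_zero, sub_zero]

theorem exists_derivation_residue_eq_mkQ_gen
    (N : Submodule (ResidueField A) (Mker k A).Cotangent)
    (hN : ∀ m : maximalIdeal A, (Mker k A).toCotangent (oneTmul k A m) ∈ N) :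
    ∃ D : Derivation k (ResidueField A) ((Mker k A).Cotangent ⧸ N),
      ∀ a, D (residue A a) = N.mkQ ((Mker k A).toCotangent (gen k A a)) := by
  refine Derivation.exists_comp_eq_of_surjective (IsScalarTower.toAlgHom k A (ResidueField A))
    residue_surjective (N.mkQ.restrictScalars k ∘ₗ (Mker k A).toCotangent.restrictScalars k ∘ₗ
      genₗ k A) (fun a b => ?_) (fun a ha => ?_)
  · simp [genₗ, toCotangent_gen_mul]
  · have hm : a ∈ maximalIdeal A := (residue_eq_zero_iff a).1 ha
    simpa [genₗ, ← oneTmul_eq_gen k A ⟨a, hm⟩] using hN ⟨a, hm⟩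

end Cotangent

/-- Let `k` be a field and `(A, 𝔪)` a local `k`-algebra with residue field
`K = A/𝔪`.  Let `ϑ : 𝔪/𝔪² → M̃/M̃²` be the `K`-linear map induced by `a ↦ 1 ⊗ a`, and let
`ψ : M̃/M̃² → Ω_{K/k}` be the canonical `K`-linear map (induced by the conormal sequence for
`Ã → K`, characterized by `ψ[1⊗a − a(x)⊗1] = d_{K/k}(a(x))`).  Then the sequence
`𝔪/𝔪² → M̃/M̃² → Ω_{K/k} → 0` is exact: `ψ` is surjective and its kernel equals the image
of `ϑ`. -/
theorem stmt_9 (k A : Type*) [Field k] [CommRing A] [IsLocalRing A] [Algebra k A]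
    (ϑ : (maximalIdeal A).Cotangent →ₗ[ResidueField A] (Mker k A).Cotangent)
    (hϑ : ∀ m : maximalIdeal A,
      ϑ ((maximalIdeal A).toCotangent m) = (Mker k A).toCotangent (oneTmul k A m))
    (ψ : (Mker k A).Cotangent →ₗ[ResidueField A] Ω[ResidueField A⁄k])
    (hψ : ∀ a : A, ψ ((Mker k A).toCotangent (gen k A a)) =
      KaehlerDifferential.D k (ResidueField A) (residue A a)) :
    Function.Surjective ψ ∧ LinearMap.range ϑ = LinearMap.ker ψ := by
  obtain ⟨D, hD⟩ := exists_derivation_residue_eq_mkQ_gen k A (LinearMap.range ϑ)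
    fun m => hϑ m ▸ LinearMap.mem_range_self ϑ _
  have hDψ : D.liftKaehlerDifferential ∘ₗ ψ = (LinearMap.range ϑ).mkQ := by
    refine LinearMap.ext_on (span_range_toCotangent_gen k A) ?_
    rintro _ ⟨a, rfl⟩
    rw [LinearMap.comp_apply, hψ, Derivation.liftKaehlerDifferential_comp_D, hD]
  refine ⟨?_, le_antisymm ?_ fun x hx => ?_⟩
  · rw [← LinearMap.range_eq_top, ← top_le_iff,
      ← KaehlerDifferential.span_range_derivation k (ResidueField A), Submodule.span_le]
    rintro _ ⟨y, rfl⟩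
    obtain ⟨a, rfl⟩ := residue_surjective y
    exact ⟨_, hψ a⟩
  · rintro _ ⟨t, rfl⟩
    obtain ⟨m, rfl⟩ := Ideal.toCotangent_surjective _ t
    rw [LinearMap.mem_ker, hϑ, oneTmul_eq_gen, hψ, (residue_eq_zero_iff _).2 m.2, map_zero]
  · rw [← Submodule.Quotient.mk_eq_zero, ← Submodule.mkQ_apply, ← hDψ, LinearMap.comp_apply,
      LinearMap.mem_ker.1 hx, map_zero]
end

section
/- Let k be a field and (A, 𝔪) a local k-algebra with residue field K = A/𝔪. Let Ã = K ⊗_k A and let M̃ be the kernel of the evaluation map Ã → K, λ⊗a ↦ λ·a(x). Then there is a K-linear isomorphism M̃/M̃² ≅ Ω_{A/k} ⊗_A K; that is, the conormal space of the ideal M̃ of Ã is isomorphic to the fiber of the module of Kähler differentials of A over k at the closed point. -/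
open IsLocalRing TensorProduct

/-!
Write `ε : L ⊗[R] A → L`, `λ ⊗ a ↦ λ · a(x)`, for an `A`-algebra `L` (here `L = K`) and
`I = ker ε`. Since `ε` is split by `L → L ⊗[R] A`, the map `π u = u - ε(u)` projects onto `I`,
and `π(uv) = π(u) π(v) + ε(u) π(v) + ε(v) π(u)`; modulo `I²` this makes `a ↦ [π(1 ⊗ a)]` a
derivation, hence a map `L ⊗[A] Ω[A⁄R] → I/I²`. Conversely `λ ⊗ a ↦ λ ⊗ da` obeys the Leibniz rule
twisted by `ε`, so it kills `I²` and induces `I/I² → L ⊗[A] Ω[A⁄R]`. Both composites fix the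
generators `[π u]` and `1 ⊗ da`.
-/

namespace PointEval

variable (R A L : Type*) [CommRing R] [CommRing A] [CommRing L] [Algebra R A] [Algebra A L]
  [Algebra R L] [IsScalarTower R A L]

noncomputable def eval : L ⊗[R] A →ₐ[L] L :=
  Algebra.TensorProduct.lift (AlgHom.id _ _) (IsScalarTower.toAlgHom R A L)
    fun _ _ => Commute.all _ _

noncomputable abbrev ker : Ideal (L ⊗[R] A) := RingHom.ker (eval R A L)

variable {R A L}

@[simp]
lemma eval_tmul (l : L) (a : A) : eval R A L (l ⊗ₜ a) = l * algebraMap A L a := by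
  simp [eval]

variable (R A L)

noncomputable def projKer : L ⊗[R] A →ₗ[L] ker R A L where
  toFun u := ⟨u - algebraMap L _ (eval R A L u), by simp⟩
  map_add' u v := Subtype.ext (by simp only [map_add, Submodule.coe_add]; abel)
  map_smul' l u := Subtype.ext (by simp [Algebra.smul_def, mul_sub])

variable {R A L}

lemma projKer_apply (u : L ⊗[R] A) :
    (projKer R A L u : L ⊗[R] A) = u - algebraMap L _ (eval R A L u) := rfl

lemma projKer_of_mem (m : ker R A L) : projKer R A L m = m :=
  Subtype.ext (by simp [projKer_apply, RingHom.mem_ker.mp m.2])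

lemma projKer_mul (u v : L ⊗[R] A) :
    (projKer R A L (u * v) : L ⊗[R] A) = projKer R A L u * projKer R A L v
      + eval R A L u • (projKer R A L v : L ⊗[R] A)
      + eval R A L v • (projKer R A L u : L ⊗[R] A) := by
  simp only [projKer_apply, map_mul, Algebra.smul_def]
  ring

variable (R A L)

noncomputable def tensorD : L ⊗[R] A →ₗ[L] L ⊗[A] Ω[A⁄R] :=
  ((TensorProduct.mk A L Ω[A⁄R] 1).restrictScalars R ∘ₗ
    (KaehlerDifferential.D R A).toLinearMap).liftBaseChange L

variable {R A L}

@[simp]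
lemma tensorD_tmul (l : L) (a : A) :
    tensorD R A L (l ⊗ₜ a) = l ⊗ₜ KaehlerDifferential.D R A a := by
  simp [tensorD, smul_tmul']

lemma tensorD_mul (u v : L ⊗[R] A) :
    tensorD R A L (u * v) = eval R A L u • tensorD R A L v
      + eval R A L v • tensorD R A L u := by
  induction u with
  | zero => simp
  | add u₁ u₂ h₁ h₂ => simp only [add_mul, map_add, h₁, h₂, add_smul, smul_add]; abel
  | tmul l a =>
    induction v with
    | zero => simp
    | add v₁ v₂ h₁ h₂ => simp only [mul_add, map_add, h₁, h₂, add_smul, smul_add]; abel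
    | tmul m b =>
      simp only [Algebra.TensorProduct.tmul_mul_tmul, tensorD_tmul, eval_tmul,
        Derivation.leibniz, tmul_add, tmul_smul, smul_tmul', Algebra.smul_def,
        Algebra.algebraMap_self, RingHom.id_apply]
      ring_nf

lemma tensorD_projKer (u : L ⊗[R] A) : tensorD R A L (projKer R A L u) = tensorD R A L u := by
  simp [projKer_apply]

variable (R A L)

noncomputable def cotangentToTensor :
    (ker R A L).Cotangent →ₗ[L] L ⊗[A] Ω[A⁄R] :=
  Ideal.Cotangent.lift (tensorD R A L ∘ₗ (ker R A L).subtype.restrictScalars L)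
    fun x y => by
      simp [tensorD_mul, RingHom.mem_ker.mp x.2, RingHom.mem_ker.mp y.2]

variable {R A L}

lemma cotangentToTensor_toCotangent (m : ker R A L) :
    cotangentToTensor R A L ((ker R A L).toCotangent m) = tensorD R A L m :=
  rfl

lemma toCotangent_projKer_mul (u v : L ⊗[R] A) :
    (ker R A L).toCotangent (projKer R A L (u * v)) =
      eval R A L u • (ker R A L).toCotangent (projKer R A L v)
      + eval R A L v • (ker R A L).toCotangent (projKer R A L u) := by
  rw [← LinearMap.map_smul_of_tower (ker R A L).toCotangent,
    ← LinearMap.map_smul_of_tower (ker R A L).toCotangent, ← map_add,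
    Ideal.toCotangent_eq, Submodule.coe_add, Submodule.coe_smul_of_tower,
    Submodule.coe_smul_of_tower, projKer_mul, add_assoc, add_sub_cancel_right, pow_two]
  exact Ideal.mul_mem_mul (projKer R A L u).2 (projKer R A L v).2

variable (R A L)

noncomputable def cotangentDerivation : Derivation R A (ker R A L).Cotangent where
  toLinearMap := (ker R A L).toCotangent.restrictScalars R ∘ₗ
    (projKer R A L).restrictScalars R ∘ₗ Algebra.TensorProduct.includeRight.toLinearMap
  map_one_eq_zero' := by
    have h : projKer R A L 1 = 0 :=
      Subtype.ext (by simp [projKer_apply, Algebra.TensorProduct.one_def])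
    simp [← Algebra.TensorProduct.one_def, h]
  leibniz' a b := by
    simp only [LinearMap.coe_comp, LinearMap.coe_restrictScalars, Function.comp_apply,
      AlgHom.toLinearMap_apply, Algebra.TensorProduct.includeRight_apply]
    have hab : (1 : L) ⊗ₜ[R] (a * b) = (1 ⊗ₜ a) * (1 ⊗ₜ b) := by
      rw [Algebra.TensorProduct.tmul_mul_tmul, mul_one]
    rw [hab, toCotangent_projKer_mul, eval_tmul, eval_tmul, one_mul, one_mul,
      algebraMap_smul, algebraMap_smul, add_comm]

noncomputable def tensorToCotangent : L ⊗[A] Ω[A⁄R] →ₗ[L] (ker R A L).Cotangent :=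
  (cotangentDerivation R A L).liftKaehlerDifferential.liftBaseChange L

variable {R A L}

lemma cotangentDerivation_apply (a : A) :
    cotangentDerivation R A L a = (ker R A L).toCotangent (projKer R A L (1 ⊗ₜ a)) :=
  rfl

lemma tensorToCotangent_tensorD (u : L ⊗[R] A) :
    tensorToCotangent R A L (tensorD R A L u) =
      (ker R A L).toCotangent (projKer R A L u) := by
  induction u with
  | zero => simp
  | add u v hu hv => rw [map_add, map_add, hu, hv, map_add, map_add]
  | tmul l a =>
    rw [tensorD_tmul, tensorToCotangent, LinearMap.liftBaseChange_tmul,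
      Derivation.liftKaehlerDifferential_comp_D, cotangentDerivation_apply,
      ← LinearMap.map_smul_of_tower, ← map_smul, smul_tmul', smul_eq_mul, mul_one]

lemma cotangentToTensor_comp_tensorToCotangent :
    cotangentToTensor R A L ∘ₗ tensorToCotangent R A L = LinearMap.id := by
  ext a
  change cotangentToTensor R A L (tensorToCotangent R A L (1 ⊗ₜ KaehlerDifferential.D R A a)) =
    1 ⊗ₜ KaehlerDifferential.D R A a
  rw [← tensorD_tmul, tensorToCotangent_tensorD, cotangentToTensor_toCotangent, tensorD_projKer]

lemma tensorToCotangent_comp_cotangentToTensor :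
    tensorToCotangent R A L ∘ₗ cotangentToTensor R A L = LinearMap.id := by
  ext x
  obtain ⟨m, rfl⟩ := Ideal.toCotangent_surjective _ x
  rw [LinearMap.comp_apply, cotangentToTensor_toCotangent, tensorToCotangent_tensorD,
    projKer_of_mem, LinearMap.id_apply]

variable (R A L)

noncomputable def cotangentEquiv : (ker R A L).Cotangent ≃ₗ[L] L ⊗[A] Ω[A⁄R] :=
  .ofLinearMap (cotangentToTensor R A L) (tensorToCotangent R A L)
    cotangentToTensor_comp_tensorToCotangent tensorToCotangent_comp_cotangentToTensor

end PointEval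

/-- Let `k` be a field and `(A, 𝔪)` a local `k`-algebra with residue field
`K = A/𝔪`, `Ã = K ⊗_k A`, and `M̃` the kernel of the evaluation map `Ã → K`.  Then there is a
`K`-linear isomorphism `M̃/M̃² ≅ K ⊗_A Ω_{A/k}`: the conormal space of the ideal `M̃` of `Ã` is
isomorphic to the fiber of the module of Kähler differentials of `A` over `k` at the closed
point. -/
theorem stmt_10 (k A : Type*) [Field k] [CommRing A] [IsLocalRing A] [Algebra k A] :
    Nonempty ((Mker k A).Cotangent ≃ₗ[ResidueField A] (ResidueField A ⊗[A] Ω[A⁄k])) :=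
  ⟨PointEval.cotangentEquiv k A (ResidueField A)⟩
end
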